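/- Fix an integer k ≥ 2. For j ≥ 0 set (z;z)_j = ∏_{i=1}^{j} (1 − z^i) and h_j = z^{j(j+1)} · ∏_{i=1}^{j} (1 + (k−1) z^i), and for ℓ ≥ 1 define B_ℓ = Σ_{j=0}^∞ z^{ℓj} h_j (z;z)_j^{−2} · (ℓ + Σ_{m=1}^{j} (1 + 2(1 − z^m)^{−1} − (1 + (k−1) z^m)^{−1})) ∈ ℚ[[z]]. Then for all ℓ ≥ 1: B_{ℓ+2} − 2 B_{ℓ+1} + B_ℓ = z^{ℓ+2} B_{ℓ+2} + (k − 1) z^{ℓ+3} B_{ℓ+3}. -/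

import Mathlib

/-- The `q`-Pochhammer symbol `(z;z)_j = ∏_{i=1}^{j} (1 − zⁱ)` in `ℚ[[z]]`. -/
noncomputable def qPoch (j : ℕ) : PowerSeries ℚ :=
  ∏ i ∈ Finset.Icc 1 j, (1 - (PowerSeries.X : PowerSeries ℚ) ^ i)

/-- `h_j = z^{j(j+1)} · ((1−k)z; z)_j = z^{j(j+1)} · ∏_{i=1}^{j} (1 + (k−1) zⁱ)`. -/
noncomputable def hSer (k j : ℕ) : PowerSeries ℚ :=
  (PowerSeries.X : PowerSeries ℚ) ^ (j * (j + 1)) *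
    ∏ i ∈ Finset.Icc 1 j, (1 + PowerSeries.C ((k : ℚ) - 1) * PowerSeries.X ^ i)

/-- The `j`-th summand `z^{ℓj} h_j (z;z)_j^{−2}` of `A_ℓ`. -/
noncomputable def Aterm (k ℓ j : ℕ) : PowerSeries ℚ :=
  (PowerSeries.X : PowerSeries ℚ) ^ (ℓ * j) * hSer k j * ((qPoch j)⁻¹) ^ 2

/-- `A_ℓ = Σ_{j=0}^∞ z^{ℓj} h_j (z;z)_j^{−2}`.  The series converges in the `z`-adic
topology since `h_j` is divisible by `z^{j(j+1)}`; the coefficient of `zⁿ` only receives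
contributions from the finitely many `j ≤ n`, so the sum may be truncated there. -/
noncomputable def Aser (k ℓ : ℕ) : PowerSeries ℚ :=
  PowerSeries.mk fun n =>
    ∑ j ∈ Finset.range (n + 1), PowerSeries.coeff n (Aterm k ℓ j)

/-- The factor `ℓ + Σ_{m=1}^{j} (1 + 2(1 − z^m)^{−1} − (1 + (k−1) z^m)^{−1})`. -/
noncomputable def Bfactor (k ℓ j : ℕ) : PowerSeries ℚ :=
  (ℓ : PowerSeries ℚ) +
    ∑ m ∈ Finset.Icc 1 j,
      (1 + 2 * ((1 - (PowerSeries.X : PowerSeries ℚ) ^ m)⁻¹) -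
        ((1 + PowerSeries.C ((k : ℚ) - 1) * PowerSeries.X ^ m)⁻¹))

/-- The `j`-th summand of `B_ℓ`. -/
noncomputable def Bterm (k ℓ j : ℕ) : PowerSeries ℚ :=
  Aterm k ℓ j * Bfactor k ℓ j

/-- `B_ℓ = Σ_{j=0}^∞ z^{ℓj} h_j (z;z)_j^{−2} ·
(ℓ + Σ_{m=1}^{j} (1 + 2(1 − z^m)^{−1} − (1 + (k−1) z^m)^{−1}))`, the series converging
`z`-adically since `h_j` is divisible by `z^{j(j+1)}`. -/
noncomputable def Bser (k ℓ : ℕ) : PowerSeries ℚ :=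
  PowerSeries.mk fun n =>
    ∑ j ∈ Finset.range (n + 1), PowerSeries.coeff n (Bterm k ℓ j)

/-!
Write `B_ℓ = Σ_j T_ℓ(j)` as a `z`-adically convergent sum, `T_ℓ(j)` being divisible by `z^j`.
Since `T_ℓ(0) = ℓ`, the second difference in `ℓ` kills the `j = 0` terms, and a direct computation
with `(z;z)_{j+1} = (z;z)_j (1 - z^{j+1})` and `h_{j+1} = z^{2(j+1)} (1 + (k-1) z^{j+1}) h_j` gives
`T_{ℓ+2}(j+1) - 2 T_{ℓ+1}(j+1) + T_ℓ(j+1) = z^{ℓ+2} T_{ℓ+2}(j) + (k-1) z^{ℓ+3} T_{ℓ+3}(j)`.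
Summing over `j` yields the recurrence.
-/

open PowerSeries PowerSeries.WithPiTopology Finset

theorem PowerSeries.WithPiTopology.hasSum_mk_sum_range_coeff {R : Type*} [Semiring R]
    [TopologicalSpace R] {f : ℕ → R⟦X⟧} (hf : ∀ j, X ^ j ∣ f j) :
    HasSum f (mk fun n => ∑ j ∈ range (n + 1), coeff n (f j)) := by
  rw [hasSum_iff_hasSum_coeff]
  intro n
  rw [coeff_mk]
  refine hasSum_sum_of_ne_finset_zero fun j hj => ?_
  exact (X_pow_dvd_iff.mp (hf j)) n (by simpa using hj)

theorem qPoch_succ (j : ℕ) : qPoch (j + 1) = qPoch j * (1 - X ^ (j + 1)) :=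
  prod_Icc_succ_top (by omega) _

theorem hSer_succ (k j : ℕ) :
    hSer k (j + 1) = (X ^ (j + 1)) ^ 2 * (1 + C ((k : ℚ) - 1) * X ^ (j + 1)) * hSer k j := by
  rw [hSer, hSer, prod_Icc_succ_top (by omega)]
  ring

theorem Aterm_succ (k ℓ j : ℕ) :
    Aterm k ℓ (j + 1) = X ^ ℓ * (X ^ (j + 1)) ^ 2 * (1 + C ((k : ℚ) - 1) * X ^ (j + 1)) *
      ((1 - X ^ (j + 1))⁻¹) ^ 2 * Aterm k ℓ j := by
  rw [Aterm, Aterm, hSer_succ, qPoch_succ, PowerSeries.mul_inv_rev]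
  ring

theorem Aterm_add_left (k ℓ i j : ℕ) : Aterm k (ℓ + i) j = (X ^ j) ^ i * Aterm k ℓ j := by
  rw [Aterm, Aterm]
  ring

theorem Bfactor_add_left (k ℓ i j : ℕ) : Bfactor k (ℓ + i) j = Bfactor k ℓ j + i := by
  rw [Bfactor, Bfactor]
  push_cast
  ring

theorem Bfactor_succ (k ℓ j : ℕ) :
    Bfactor k ℓ (j + 1) = Bfactor k ℓ j +
      (1 + 2 * (1 - X ^ (j + 1))⁻¹ - (1 + C ((k : ℚ) - 1) * X ^ (j + 1))⁻¹) := by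
  rw [Bfactor, Bfactor, sum_Icc_succ_top (by omega)]
  ring

theorem Bterm_zero (k ℓ : ℕ) : Bterm k ℓ 0 = ℓ := by
  simp [Bterm, Aterm, hSer, qPoch, Bfactor]

theorem Bterm_succ_second_difference (k ℓ j : ℕ) :
    Bterm k (ℓ + 2) (j + 1) - 2 * Bterm k (ℓ + 1) (j + 1) + Bterm k ℓ (j + 1) =
      X ^ (ℓ + 2) * Bterm k (ℓ + 2) j + C ((k : ℚ) - 1) * X ^ (ℓ + 3) * Bterm k (ℓ + 3) j := by
  have hu : (1 - X ^ (j + 1)) * (1 - X ^ (j + 1) : ℚ⟦X⟧)⁻¹ = 1 :=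
    PowerSeries.mul_inv_cancel _ (by simp)
  have hv : (1 + C ((k : ℚ) - 1) * X ^ (j + 1)) * (1 + C ((k : ℚ) - 1) * X ^ (j + 1))⁻¹ = 1 :=
    PowerSeries.mul_inv_cancel _ (by simp)
  simp only [Bterm, Aterm_succ, Aterm_add_left, Bfactor_succ, Bfactor_add_left]
  set c := C ((k : ℚ) - 1)
  set ui := (1 - X ^ (j + 1) : ℚ⟦X⟧)⁻¹
  set vi := (1 + c * X ^ (j + 1))⁻¹
  -- With `q = z^{j+1}`, `v = 1 + (k-1) q`, `A = Aterm k ℓ j` and `F = Bfactor k ℓ j`, both sides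
  -- equal `z^ℓ q² A (v (F + 3) - 1)`: the second difference `1 - 2q + q²` cancels the new factor
  -- of `(z;z)_{j+1}²`.
  linear_combination X ^ ℓ * (X ^ (j + 1)) ^ 2 * Aterm k ℓ j * ((1 + c * X ^ (j + 1)) *
    ((Bfactor k ℓ j + 1 + 2 * ui - vi) * ((1 - X ^ (j + 1)) * ui + 1) - 2 * X ^ (j + 1) * ui + 2) *
      hu - hv)

theorem X_pow_dvd_Bterm (k ℓ j : ℕ) : (X : ℚ⟦X⟧) ^ j ∣ Bterm k ℓ j := by
  have hdvd : (X : ℚ⟦X⟧) ^ j ∣ hSer k j :=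
    (pow_dvd_pow X (Nat.le_mul_of_pos_right j j.succ_pos)).trans (dvd_mul_right _ _)
  exact hdvd.trans (((dvd_mul_left _ _).mul_right _).mul_right _)

theorem hasSum_Bterm (k ℓ : ℕ) : HasSum (Bterm k ℓ) (Bser k ℓ) :=
  hasSum_mk_sum_range_coeff (X_pow_dvd_Bterm k ℓ)

theorem B_solves_recurrence_general (k : ℕ) (ℓ : ℕ) :
    Bser k (ℓ + 2) - 2 * Bser k (ℓ + 1) + Bser k ℓ =
      (PowerSeries.X : PowerSeries ℚ) ^ (ℓ + 2) * Bser k (ℓ + 2) +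
        PowerSeries.C ((k : ℚ) - 1) * (PowerSeries.X : PowerSeries ℚ) ^ (ℓ + 3) *
          Bser k (ℓ + 3) := by
  have hLHS := (((hasSum_Bterm k (ℓ + 2)).sub ((hasSum_Bterm k (ℓ + 1)).mul_left 2)).add
    (hasSum_Bterm k ℓ))
  have hRHS := ((hasSum_Bterm k (ℓ + 2)).mul_left (X ^ (ℓ + 2))).add
    ((hasSum_Bterm k (ℓ + 3)).mul_left (C ((k : ℚ) - 1) * X ^ (ℓ + 3)))
  have hD0 : Bterm k (ℓ + 2) 0 - 2 * Bterm k (ℓ + 1) 0 + Bterm k ℓ 0 = 0 := by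
    simp only [Bterm_zero]
    push_cast
    ring
  rw [← hasSum_nat_add_iff' 1] at hLHS
  simp only [Bterm_succ_second_difference, sum_range_one, hD0, sub_zero] at hLHS
  exact hLHS.unique (by simpa only [mul_assoc] using hRHS)

/-- For all `ℓ ≥ 1`:
`B_{ℓ+2} − 2 B_{ℓ+1} + B_ℓ = z^{ℓ+2} B_{ℓ+2} + (k − 1) z^{ℓ+3} B_{ℓ+3}`. -/
theorem B_solves_recurrence (k : ℕ) (hk : 2 ≤ k) (ℓ : ℕ) (hℓ : 1 ≤ ℓ) :
    Bser k (ℓ + 2) - 2 * Bser k (ℓ + 1) + Bser k ℓ =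
      (PowerSeries.X : PowerSeries ℚ) ^ (ℓ + 2) * Bser k (ℓ + 2) +
        PowerSeries.C ((k : ℚ) - 1) * (PowerSeries.X : PowerSeries ℚ) ^ (ℓ + 3) *
          Bser k (ℓ + 3) :=
  B_solves_recurrence_general k ℓ
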